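/- Factorial growth comparison for Gevrey classes: for s ≥ 1 and ε ∈ (0,1), there exists a constant C ≥ 1 such that for all m ∈ ℕ with m ≥ 1, ⌈m/ε⌉!^s ≤ C^{m+1} · (m!)^{s/ε}. (This shows that bounds of the form Cᵐ⌈m/ε⌉!^s imply membership in the Gevrey class G^{s/ε}.) -/

import Mathlib

/-!
Put `u = 1/ε` and `N = ⌈m u⌉ ≤ min (2 m u) (m u + 1)`. The crude upper bound
`N! ≤ N^N ≤ (2 m u)^(m u + 1)` is compared with `m^m ≤ e^m m!` raised to the power `u`:
the powers of `m` cancel up to one extra factor `m ≤ e^m`, and what remains is geometric in `m`.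
Raising to the power `s ≥ 0` gives the theorem.
-/

open Real Nat

lemma pow_le_exp_mul_factorial (n : ℕ) : (n : ℝ) ^ n ≤ exp n * n ! := by
  have h := pow_div_factorial_le_exp (x := (n : ℝ)) n.cast_nonneg n
  rwa [div_le_iff₀ (by positivity)] at h

lemma rpow_mul_le_exp_mul_factorial_rpow (n : ℕ) {u : ℝ} (hu : 0 ≤ u) :
    (n : ℝ) ^ (n * u) ≤ exp (n * u) * (n ! : ℝ) ^ u := by
  rw [rpow_natCast_mul n.cast_nonneg, exp_mul, ← mul_rpow (exp_pos _).le (by positivity)]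
  exact rpow_le_rpow (by positivity) (pow_le_exp_mul_factorial n) hu

lemma factorial_ceil_le_rpow {x : ℝ} (hx : 1 ≤ x) : (⌈x⌉₊ ! : ℝ) ≤ (2 * x) ^ (x + 1) := by
  have h_two : (⌈x⌉₊ : ℝ) ≤ 2 * x := Nat.ceil_le_two_mul (by linarith)
  have h_succ : (⌈x⌉₊ : ℝ) ≤ x + 1 := (Nat.ceil_lt_add_one (by linarith)).le
  calc (⌈x⌉₊ ! : ℝ) ≤ (⌈x⌉₊ : ℝ) ^ (⌈x⌉₊ : ℝ) := by
        rw [rpow_natCast]; exact_mod_cast Nat.factorial_le_pow _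
    _ ≤ (2 * x) ^ (⌈x⌉₊ : ℝ) := rpow_le_rpow (by positivity) h_two (by positivity)
    _ ≤ (2 * x) ^ (x + 1) := rpow_le_rpow_of_exponent_le (by linarith) h_succ

lemma factorial_ceil_mul_le {m : ℕ} (hm : 1 ≤ m) {u : ℝ} (hu : 1 ≤ u) :
    (⌈m * u⌉₊ ! : ℝ) ≤ ((2 * exp 2 * u) ^ u) ^ (m + 1) * (m ! : ℝ) ^ u := by
  have hm' : (1 : ℝ) ≤ m := by exact_mod_cast hm
  have hm0 : (0 : ℝ) < m := by linarith
  have h_exp_le : (m : ℝ) * u + 1 ≤ u * (m + 1) := by nlinarith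
  calc (⌈m * u⌉₊ ! : ℝ) ≤ (2 * (m * u)) ^ (m * u + 1) := factorial_ceil_le_rpow (by nlinarith)
    _ = (2 * u) ^ (m * u + 1) * ((m : ℝ) ^ (m * u) * m) := by
        rw [show 2 * (m * u) = 2 * u * m by ring, mul_rpow (by positivity) hm0.le,
          rpow_add_one hm0.ne']
    _ ≤ (2 * u) ^ (m * u + 1) * (exp (m * u) * (m ! : ℝ) ^ u * exp m) := by
        gcongr
        · exact rpow_mul_le_exp_mul_factorial_rpow m (by linarith)
        · exact (add_one_le_exp _).trans' (by linarith)
    _ = (2 * u) ^ (m * u + 1) * exp (m * u + m) * (m ! : ℝ) ^ u := by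
        rw [exp_add]; ring
    _ ≤ (2 * u) ^ (u * (m + 1)) * exp (2 * (u * (m + 1))) * (m ! : ℝ) ^ u := by
        gcongr
        · linarith
        · nlinarith
    _ = ((2 * exp 2 * u) ^ u) ^ (m + 1) * (m ! : ℝ) ^ u := by
        rw [exp_mul, ← mul_rpow (by positivity) (exp_pos _).le, ← rpow_mul_natCast (by positivity)]
        push_cast; ring_nf

theorem gevrey_factorial_growth (s : ℝ) (hs : 1 ≤ s) (ε : ℝ) (hε0 : 0 < ε) (hε1 : ε < 1) :
    ∃ C : ℝ, 1 ≤ C ∧ ∀ m : ℕ, 1 ≤ m →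
      (((Nat.ceil ((m : ℝ) / ε)).factorial : ℝ)) ^ s
        ≤ C ^ (m + 1) * ((m.factorial : ℝ)) ^ (s / ε) := by
  have hu : 1 ≤ ε⁻¹ := one_le_inv₀ hε0 |>.mpr hε1.le
  have hs0 : 0 ≤ s := by linarith
  have hD : 1 ≤ (2 * exp 2 * ε⁻¹) ^ ε⁻¹ := by
    refine one_le_rpow ?_ (by linarith)
    nlinarith [add_one_le_exp 2]
  refine ⟨((2 * exp 2 * ε⁻¹) ^ ε⁻¹) ^ s, one_le_rpow hD hs0, fun m hm => ?_⟩
  calc (⌈(m : ℝ) / ε⌉₊ ! : ℝ) ^ s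
      ≤ (((2 * exp 2 * ε⁻¹) ^ ε⁻¹) ^ (m + 1) * (m ! : ℝ) ^ ε⁻¹) ^ s :=
        rpow_le_rpow (by positivity) (factorial_ceil_mul_le hm hu) hs0
    _ = (((2 * exp 2 * ε⁻¹) ^ ε⁻¹) ^ s) ^ (m + 1) * (m ! : ℝ) ^ (s / ε) := by
        rw [mul_rpow (by positivity) (by positivity), ← rpow_pow_comm (by positivity),
          ← rpow_mul (x := (m ! : ℝ)) (by positivity), inv_mul_eq_div]
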